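/- arXiv:1308.3012 — 2 statements merged into one kernel-verified Lean document; each statement's English description precedes it below -/
import Mathlib

section
/- Let (λ, s, t) be a doubly marked partition and define α = (λ_1 − t + s − 1, ..., λ_{λ'_s} − t + s − 1, λ_{λ'_s + 1}, ..., λ_ℓ) and β = (λ'_s, λ'_{s+1}, ..., λ'_t). Then α is a partition (weakly decreasing with nonnegative parts), β is a partition all of whose parts are equal, and |α| + |β| = |λ|. -/
open Finset

/-- The `i`-th part (1-indexed) of a partition given as a weakly decreasing list;
`0` if `i` is out of range. -/
def part (l : List ℕ) (i : ℕ) : ℕ := l.getD (i - 1) 0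

/-- `conj l s = λ'_s`, the `s`-th part of the conjugate partition:
the number of parts of `l` that are at least `s`. -/
def conj (l : List ℕ) (s : ℕ) : ℕ := l.countP (fun x => s ≤ x)

/-- A partition represented as a weakly decreasing list of positive integers. -/
def IsPartitionList (l : List ℕ) : Prop := l.Pairwise (· ≥ ·) ∧ ∀ x ∈ l, 0 < x

/-- The side `D(λ)` of the Durfee square: the number of indices `i` with `λ_i ≥ i`. -/
def durfee (l : List ℕ) : ℕ := (List.range l.length).countP (fun i => i + 1 ≤ l.getD i 0)

/-- A doubly marked partition `(λ, s, t)`: `1 ≤ s ≤ D(λ)`, `s ≤ t ≤ λ_1`, `λ'_s = λ'_t`. -/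
def IsDoublyMarked (l : List ℕ) (s t : ℕ) : Prop :=
  IsPartitionList l ∧ 1 ≤ s ∧ s ≤ durfee l ∧ s ≤ t ∧ t ≤ part l 1 ∧ conj l s = conj l t

/-- `g(λ,s,t) = λ'_s - s + 1` (here `s ≤ λ'_s`, so natural subtraction is exact). -/
def sptg (l : List ℕ) (s : ℕ) : ℕ := conj l s - s + 1

/-- The spt-crank `c(λ,s,t) = g - λ_g + t - s`. -/
def sptCrank (l : List ℕ) (s t : ℕ) : ℤ :=
  (sptg l s : ℤ) - part l (sptg l s) + (t : ℤ) - s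

/-- The partition `p` of `n` written as a weakly decreasing list. -/
def toList {n : ℕ} (p : n.Partition) : List ℕ := (p.parts.sort (· ≤ ·)).reverse

/-- The smallest part of a partition of `n` (`0` for the empty partition). -/
def smin {n : ℕ} (p : n.Partition) : ℕ := (p.parts.sort (· ≤ ·)).headD 0

/-- `spt n = Σ_{λ ⊢ n} n_s(λ)`: the total number of occurrences of smallest parts. -/
def spt (n : ℕ) : ℕ := ∑ p : n.Partition, p.parts.count (smin p)

/-- The map `ψ`: `α = (λ_1 - t + s - 1, …, λ_{λ'_s} - t + s - 1, λ_{λ'_s+1}, …, λ_ℓ)`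
(as a list of integers) and `β = (λ'_s, λ'_{s+1}, …, λ'_t)`. -/
def psi (l : List ℕ) (s t : ℕ) : List ℤ × List ℕ :=
  ((l.take (conj l s)).map (fun x => (x : ℤ) - t + s - 1) ++
     (l.drop (conj l s)).map (fun x => (x : ℤ)),
   (List.range (t - s + 1)).map (fun i => conj l (s + i)))

/-!
Write `c = λ'_s`. As `λ` is weakly decreasing, its first `c` parts are exactly the parts `≥ s`,
and since `λ'_t = c` they are even `≥ t`, while all later parts are `< s`. Lowering each of the
first `c` parts by `t - s + 1` therefore leaves them `≥ s - 1`, which still dominates every later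
part. Monotonicity of `λ'` squeezes `λ'_s = ⋯ = λ'_t = c`, so `|β| = (t - s + 1) c` is exactly the
amount removed from `λ`. Finally `s ≤ D(λ)` gives `c ≥ s ≥ 1`.
-/

namespace List

variable {α : Type*}

theorem take_countP_eq_filter {p : α → Bool} {l : List α}
    (hl : l.Pairwise fun a b => p b → p a) : l.take (l.countP p) = l.filter p := by
  induction l with
  | nil => rfl
  | cons a l ih =>
    rw [pairwise_cons] at hl
    by_cases ha : p a
    · simp [ha, ih hl.2]
    · have hl' : ∀ b ∈ l, ¬ p b := fun b hb hpb => ha (hl.1 b hb hpb)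
      simp [ha, countP_eq_zero.mpr hl', filter_eq_nil_iff.mpr hl']

theorem drop_countP_eq_filter_not {p : α → Bool} {l : List α}
    (hl : l.Pairwise fun a b => p b → p a) : l.drop (l.countP p) = l.filter (fun a => !p a) := by
  induction l with
  | nil => rfl
  | cons a l ih =>
    rw [pairwise_cons] at hl
    by_cases ha : p a
    · simp [ha, ih hl.2]
    · have hl' : ∀ b ∈ l, ¬ p b := fun b hb hpb => ha (hl.1 b hb hpb)
      have hfil : l.filter (fun a => !p a) = l :=
        filter_eq_self.mpr fun b hb => by simpa using hl' b hb
      simp [ha, countP_eq_zero.mpr hl', hfil]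

theorem countP_range_le {q : ℕ → Bool} {n k : ℕ} (h : ∀ i < n, q i → i < k) :
    (range n).countP q ≤ k := by
  have hsub : (range n).filter q ⊆ range k := fun i hi => by
    simp only [mem_filter, mem_range] at hi
    exact mem_range.mpr (h i hi.1 hi.2)
  simpa [countP_eq_length_filter] using
    (subperm_of_subset (nodup_range.filter q) hsub).length_le

end List

section conj

variable {l : List ℕ} {s : ℕ}

theorem conj_antitone (l : List ℕ) : Antitone (conj l) := fun _ _ hst =>
  List.countP_mono_left fun x _ hx => by simpa using le_trans hst (by simpa using hx)

theorem pairwise_decide_le_imp (hl : l.Pairwise (· ≥ ·)) :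
    l.Pairwise fun a b => decide (s ≤ b) → decide (s ≤ a) :=
  hl.imp fun hab hsb => by simpa using le_trans (by simpa using hsb) hab

theorem le_of_mem_take_conj (hl : l.Pairwise (· ≥ ·)) {x : ℕ} (hx : x ∈ l.take (conj l s)) :
    s ≤ x := by
  rw [conj, List.take_countP_eq_filter (pairwise_decide_le_imp hl)] at hx
  simpa using (List.mem_filter.mp hx).2

theorem lt_of_mem_drop_conj (hl : l.Pairwise (· ≥ ·)) {x : ℕ} (hx : x ∈ l.drop (conj l s)) :
    x < s := by
  rw [conj, List.drop_countP_eq_filter_not (pairwise_decide_le_imp hl)] at hx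
  simpa using (List.mem_filter.mp hx).2

theorem le_conj_of_le_durfee (hl : l.Pairwise (· ≥ ·)) (hs : s ≤ durfee l) : s ≤ conj l s := by
  by_contra! hlt
  -- with fewer than `s` parts `≥ s`, no index `i ≥ s - 1` can have `λ_{i+1} ≥ i + 1`
  suffices durfee l ≤ s - 1 by omega
  refine List.countP_range_le fun i hi hqi => ?_
  rw [List.getD_eq_getElem _ _ hi, decide_eq_true_eq] at hqi
  by_cases hsi : s ≤ l[i]
  · have hci : i < conj l s := by
      by_contra! hci
      have hmem : l[i] ∈ l.drop (conj l s) := List.mem_drop_iff_getElem.mpr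
        ⟨i - conj l s, by omega, by simp only [Nat.add_sub_cancel' hci]⟩
      exact absurd (lt_of_mem_drop_conj hl hmem) (not_lt.mpr hsi)
    omega
  · omega

end conj

section psi

-- `psi` casts its lists to `List ℤ` through the list monad; this normalizes them to `List.map`.
theorem psi_fst_eq (l : List ℕ) (s t : ℕ) :
    (psi l s t).1 = (l.take (conj l s)).map (fun x : ℕ => (x : ℤ) - t + s - 1) ++
      (l.drop (conj l s)).map ((↑) : ℕ → ℤ) := by
  simp only [psi, bind_pure_comp, List.map_eq_map, List.map_map]
  rfl

theorem psi_fst_sum (l : List ℕ) (s t : ℕ) :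
    (psi l s t).1.sum = l.sum - conj l s * ((t : ℤ) - s + 1) := by
  have hlen : (l.take (conj l s)).length = conj l s := by simp [conj, List.countP_le_length]
  have hsplit : (l.sum : ℤ) = (l.take (conj l s)).sum + (l.drop (conj l s)).sum := by
    rw [← Nat.cast_add, ← List.sum_append, List.take_append_drop]
  have hshift : ∀ x : ℕ, (x : ℤ) - t + s - 1 = x + (s - t - 1) := fun x => by ring
  rw [psi_fst_eq, List.sum_append, hsplit]
  simp only [hshift, List.sum_map_add, List.map_const', List.sum_replicate, hlen, nsmul_eq_mul,
    ← Nat.cast_list_sum]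
  ring

variable {l : List ℕ} {s t : ℕ}

theorem psi_fst_pairwise (hl : l.Pairwise (· ≥ ·)) (hconj : conj l s = conj l t) :
    (psi l s t).1.Pairwise (· ≥ ·) := by
  rw [psi_fst_eq, List.pairwise_append, List.pairwise_map, List.pairwise_map]
  refine ⟨(hl.sublist (List.take_sublist _ _)).imp fun h => by omega,
    (hl.sublist (List.drop_sublist _ _)).imp fun h => by omega, ?_⟩
  simp only [List.mem_map]
  rintro _ ⟨x, hx, rfl⟩ _ ⟨y, hy, rfl⟩
  have := le_of_mem_take_conj hl (hconj ▸ hx)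
  have := lt_of_mem_drop_conj hl hy
  omega

theorem psi_fst_nonneg (hl : l.Pairwise (· ≥ ·)) (hs : 1 ≤ s) (hconj : conj l s = conj l t)
    {x : ℤ} (hx : x ∈ (psi l s t).1) : 0 ≤ x := by
  rw [psi_fst_eq, List.mem_append, List.mem_map, List.mem_map] at hx
  rcases hx with ⟨y, hy, rfl⟩ | ⟨y, -, rfl⟩
  · have := le_of_mem_take_conj hl (hconj ▸ hy)
    omega
  · exact y.cast_nonneg

theorem psi_snd_eq_replicate (hst : s ≤ t) (hconj : conj l s = conj l t) :
    (psi l s t).2 = List.replicate (t - s + 1) (conj l s) := by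
  refine List.eq_replicate_iff.mpr ⟨by simp [psi], ?_⟩
  simp only [psi, List.mem_map, List.mem_range]
  rintro _ ⟨i, hi, rfl⟩
  have := conj_antitone l (Nat.le_add_right s i)
  have := conj_antitone l (show s + i ≤ t by omega)
  omega

end psi

/-- For a doubly marked partition `(λ,s,t)` with `(α,β) = ψ(λ,s,t)`: `α` is a partition
(weakly decreasing, nonnegative parts), `β` is a partition all of whose parts are equal,
and `|α| + |β| = |λ|`. -/
theorem psi_image_properties (l : List ℕ) (s t : ℕ) (h : IsDoublyMarked l s t) :
    (psi l s t).1.Pairwise (· ≥ ·) ∧ (∀ x ∈ (psi l s t).1, 0 ≤ x) ∧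
    (∀ x ∈ (psi l s t).2, 0 < x) ∧ (∃ c, ∀ x ∈ (psi l s t).2, x = c) ∧
    (psi l s t).1.sum + ((psi l s t).2.sum : ℤ) = (l.sum : ℤ) := by
  obtain ⟨⟨hl, -⟩, hs, hsd, hst, -, hconj⟩ := h
  have hsc := le_conj_of_le_durfee hl hsd
  refine ⟨psi_fst_pairwise hl hconj, fun x => psi_fst_nonneg hl hs hconj, ?_, ⟨conj l s, ?_⟩, ?_⟩
  all_goals rw [psi_snd_eq_replicate hst hconj]
  · exact fun x hx => (List.eq_of_mem_replicate hx).symm ▸ by omega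
  · exact fun x => List.eq_of_mem_replicate
  · rw [psi_fst_sum, List.sum_replicate, smul_eq_mul]
    push_cast [hst]
    ring
end

section
/- The number of partitions (α, β) of n into a pair where β has all parts equal, counted with the constraints that m is in the rank-set of α and β_1 = j + m + 1 + h (j the width of the m-Durfee rectangle of α, h the maximum integer with α_{j+m+1+h} ≥ h), for fixed m ≥ 0, j, h with 0 ≤ h ≤ j, has generating function q^{(m+j)j} · q^j · q^{h²} · [j choose h]_q · 1/((q;q)_h (q;q)_{m+j}) · q^{h+j+m+1}/(1 − q^{m+1+j+h}). -/
open Finset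

/-- The rank-set of a partition `α`: `{j - α_{j+1} : j ≥ 0}` (as integers). -/
def rankSet (l : List ℕ) : Set ℤ := {x | ∃ j : ℕ, x = (j : ℤ) - part l (j + 1)}

/-- The width `j` of the `m`-Durfee rectangle of `α`: the largest `j` such that the
`(m+j) × j` rectangle is contained in the Ferrers diagram of `α`, i.e. (for `j ≥ 1`)
`m + j ≥ 1` and `α_{m+j} ≥ j`; it is `0` if no such `j ≥ 1` exists. -/
noncomputable def mDurfeeWidth (m : ℤ) (l : List ℕ) : ℕ :=
  Nat.findGreatest (fun j => 0 < m + j ∧ (j : ℤ) ≤ part l (m + j).toNat)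
    (l.headD 0 + l.length)

/-- Given `α` with `m`-Durfee rectangle of width `j`, the maximum integer `h` such that
`α_{j+m+1+h} ≥ h`. -/
noncomputable def hMax (m : ℤ) (l : List ℕ) (j : ℕ) : ℕ :=
  Nat.findGreatest (fun h => 0 < m + j + 1 + h ∧ (h : ℤ) ≤ part l (m + j + 1 + h).toNat)
    (l.headD 0 + l.length)

open PowerSeries

/-- `(q;q)_n = ∏_{i=1}^n (1 - q^i)` as a formal power series in `q = X`. -/
noncomputable def qpoch (n : ℕ) : PowerSeries ℚ :=
  ∏ i ∈ Finset.range n, (1 - (X : PowerSeries ℚ) ^ (i + 1))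

/-- The Gaussian binomial `[j choose h]_q = (q;q)_j / ((q;q)_h (q;q)_{j-h})`. -/
noncomputable def gauss (j h : ℕ) : PowerSeries ℚ :=
  qpoch j * (qpoch h)⁻¹ * (qpoch (j - h))⁻¹

/-!
Since `i ↦ i - α_{i+1}` is strictly increasing, `m` lies in the rank-set of `α` and the
`m`-Durfee rectangle has width `j` exactly when `α_{m+j+1} = j`; and `h` is the maximal
integer with `α_{j+m+1+h} ≥ h` exactly when `α_{m+j+h+1} ≥ h ≥ α_{m+j+h+2}`.
For `j ≥ 1` such an `α` is cut, uniquely, into its first `m + j` rows (all `≥ j`), the row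
`α_{m+j+1} = j`, the next `h` rows (between `h` and `j`) and the rest (parts `≤ h`).
Removing a `(m+j) × j` rectangle from the first block and an `h × h` square from the third
leaves a partition with at most `m + j` parts, one in an `h × (j - h)` box and one with parts
`≤ h`, whose generating functions `1/(q;q)_{m+j}`, `[j choose h]_q` and `1/(q;q)_h` follow from
the usual recurrences (remove the largest part, or the first column).
The parts of `β` all equal `c = j+m+1+h`, giving `q^c/(1-q^c)`.
-/

section CountingSeries

variable {σ τ : Type*}

-- `ncard` is `0` on infinite sets, hence the `FiniteFibers` hypotheses below.
noncomputable def countGF (s : Set σ) (f : σ → ℕ) : ℚ⟦X⟧ :=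
  PowerSeries.mk fun n => ((s ∩ f ⁻¹' {n}).ncard : ℚ)

def FiniteFibers (s : Set σ) (f : σ → ℕ) : Prop := ∀ n, (s ∩ f ⁻¹' {n}).Finite

lemma coeff_countGF (s : Set σ) (f : σ → ℕ) (n : ℕ) :
    coeff n (countGF s f) = (s ∩ f ⁻¹' {n}).ncard :=
  coeff_mk _ _

lemma countGF_singleton (x : σ) (f : σ → ℕ) : countGF {x} f = X ^ f x := by
  ext n
  rw [coeff_countGF, coeff_X_pow]
  by_cases hn : n = f x
  · rw [if_pos hn, Set.inter_eq_left.mpr (by simp [hn]), Set.ncard_singleton, Nat.cast_one]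
  · rw [if_neg hn, Set.singleton_inter_eq_empty.mpr (by simpa [eq_comm] using hn),
      Set.ncard_empty, Nat.cast_zero]

lemma countGF_union {s t : Set σ} {f : σ → ℕ} (hst : Disjoint s t) (hs : FiniteFibers s f)
    (ht : FiniteFibers t f) : countGF (s ∪ t) f = countGF s f + countGF t f := by
  ext n
  rw [map_add, coeff_countGF, coeff_countGF, coeff_countGF, Set.union_inter_distrib_right,
    Set.ncard_union_eq (hst.mono Set.inter_subset_left Set.inter_subset_left) (hs n) (ht n),
    Nat.cast_add]

lemma image_inter_preimage_singleton {s : Set σ} {f : σ → ℕ} {φ : σ → τ} {g : τ → ℕ} {K : ℕ}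
    (hw : ∀ x ∈ s, g (φ x) = f x + K) (n : ℕ) :
    φ '' s ∩ g ⁻¹' {n + K} = φ '' (s ∩ f ⁻¹' {n}) := by
  ext y
  simp only [Set.mem_inter_iff, Set.mem_image, Set.mem_preimage, Set.mem_singleton_iff]
  constructor
  · rintro ⟨⟨x, hx, rfl⟩, hy⟩
    exact ⟨x, ⟨hx, by rw [hw x hx] at hy; omega⟩, rfl⟩
  · rintro ⟨x, ⟨hx, rfl⟩, rfl⟩
    exact ⟨⟨x, hx, rfl⟩, hw x hx⟩

lemma image_inter_preimage_singleton_of_lt {s : Set σ} {f : σ → ℕ} {φ : σ → τ} {g : τ → ℕ}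
    {K n : ℕ} (hw : ∀ x ∈ s, g (φ x) = f x + K) (hn : n < K) :
    φ '' s ∩ g ⁻¹' {n} = ∅ := by
  refine Set.eq_empty_of_forall_notMem ?_
  rintro _ ⟨⟨x, hx, rfl⟩, hy⟩
  have := hw x hx
  simp only [Set.mem_preimage, Set.mem_singleton_iff] at hy
  omega

lemma countGF_image {s : Set σ} {f : σ → ℕ} {φ : σ → τ} {g : τ → ℕ} (K : ℕ)
    (hφ : Set.InjOn φ s) (hw : ∀ x ∈ s, g (φ x) = f x + K) :
    countGF (φ '' s) g = X ^ K * countGF s f := by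
  ext n
  rw [coeff_countGF, coeff_X_pow_mul']
  split_ifs with hK
  · obtain ⟨n, rfl⟩ := Nat.exists_eq_add_of_le' hK
    rw [image_inter_preimage_singleton hw, (hφ.mono Set.inter_subset_left).ncard_image,
      Nat.add_sub_cancel, coeff_countGF]
  · rw [image_inter_preimage_singleton_of_lt hw (by omega), Set.ncard_empty, Nat.cast_zero]

lemma FiniteFibers.mono {s t : Set σ} {f : σ → ℕ} (hst : s ⊆ t) (ht : FiniteFibers t f) :
    FiniteFibers s f :=
  fun n => (ht n).subset (Set.inter_subset_inter_left _ hst)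

lemma FiniteFibers.image {s : Set σ} {f : σ → ℕ} {φ : σ → τ} {g : τ → ℕ} {K : ℕ}
    (hw : ∀ x ∈ s, g (φ x) = f x + K) (hs : FiniteFibers s f) : FiniteFibers (φ '' s) g := by
  intro n
  rcases lt_or_ge n K with hn | hn
  · rw [image_inter_preimage_singleton_of_lt hw hn]
    exact Set.finite_empty
  · obtain ⟨n, rfl⟩ := Nat.exists_eq_add_of_le' hn
    rw [image_inter_preimage_singleton hw]
    exact (hs n).image φ

lemma prod_inter_preimage_singleton (s : Set σ) (t : Set τ) (f : σ → ℕ) (g : τ → ℕ) (n : ℕ) :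
    s ×ˢ t ∩ (fun z => f z.1 + g z.2) ⁻¹' {n} =
      ⋃ p ∈ (antidiagonal n : Set (ℕ × ℕ)), (s ∩ f ⁻¹' {p.1}) ×ˢ (t ∩ g ⁻¹' {p.2}) := by
  ext z
  simp only [Set.mem_inter_iff, Set.mem_prod, Set.mem_preimage, Set.mem_singleton_iff,
    Set.mem_iUnion, Finset.mem_coe, HasAntidiagonal.mem_antidiagonal, exists_prop, Prod.exists]
  constructor
  · rintro ⟨⟨hs, ht⟩, rfl⟩
    exact ⟨_, _, rfl, ⟨hs, rfl⟩, ht, rfl⟩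
  · rintro ⟨a, b, rfl, ⟨hs, rfl⟩, ht, rfl⟩
    exact ⟨⟨hs, ht⟩, rfl⟩

lemma FiniteFibers.prod {s : Set σ} {t : Set τ} {f : σ → ℕ} {g : τ → ℕ}
    (hs : FiniteFibers s f) (ht : FiniteFibers t g) :
    FiniteFibers (s ×ˢ t) (fun z => f z.1 + g z.2) := by
  intro n
  rw [prod_inter_preimage_singleton]
  exact (Finset.finite_toSet _).biUnion fun p _ => (hs p.1).prod (ht p.2)

lemma countGF_prod {s : Set σ} {t : Set τ} {f : σ → ℕ} {g : τ → ℕ}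
    (hs : FiniteFibers s f) (ht : FiniteFibers t g) :
    countGF (s ×ˢ t) (fun z => f z.1 + g z.2) = countGF s f * countGF t g := by
  ext n
  have hdisj : (antidiagonal n : Set (ℕ × ℕ)).PairwiseDisjoint
      fun p => (s ∩ f ⁻¹' {p.1}) ×ˢ (t ∩ g ⁻¹' {p.2}) := by
    intro p hp q hq hpq
    refine Set.disjoint_left.mpr ?_
    rintro z ⟨⟨-, hp1⟩, -, hp2⟩ ⟨⟨-, hq1⟩, -, hq2⟩
    simp only [Finset.mem_coe, HasAntidiagonal.mem_antidiagonal, Set.mem_preimage,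
      Set.mem_singleton_iff] at hp hq hp1 hp2 hq1 hq2
    exact hpq (Prod.ext (by omega) (by omega))
  rw [coeff_countGF, coeff_mul, prod_inter_preimage_singleton,
    (Finset.finite_toSet _).ncard_biUnion (fun p _ => (hs p.1).prod (ht p.2)) hdisj,
    finsum_mem_coe_finset, Nat.cast_sum]
  refine Finset.sum_congr rfl fun p _ => ?_
  rw [Set.ncard_prod, Nat.cast_mul, coeff_countGF, coeff_countGF]

end CountingSeries

lemma IsPartitionList.cons_iff {a : ℕ} {t : List ℕ} :
    IsPartitionList (a :: t) ↔ 0 < a ∧ (∀ x ∈ t, x ≤ a) ∧ IsPartitionList t := by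
  simp only [IsPartitionList, List.pairwise_cons, List.forall_mem_cons]
  tauto

lemma IsPartitionList.nil : IsPartitionList [] := ⟨List.Pairwise.nil, by simp⟩

lemma finiteFibers_isPartitionList : FiniteFibers {l : List ℕ | IsPartitionList l} List.sum := by
  intro n
  let toPartition (l : ↥({l : List ℕ | IsPartitionList l} ∩ List.sum ⁻¹' {n})) : n.Partition :=
    ⟨l.1, fun hx => l.2.1.2 _ hx, by simpa using l.2.2⟩
  have hinj : Function.Injective toPartition := by
    intro l l' h
    have hperm : (l.1 : Multiset ℕ) = l'.1 := congrArg Nat.Partition.parts h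
    exact Subtype.ext <| (Multiset.coe_eq_coe.mp hperm).eq_of_pairwise
      (fun _ _ _ _ h₁ h₂ => le_antisymm h₂ h₁) l.2.1.1 l'.2.1.1
  have : Finite ↥({l : List ℕ | IsPartitionList l} ∩ List.sum ⁻¹' {n}) :=
    Finite.of_injective toPartition hinj
  exact Set.toFinite _

lemma FiniteFibers.of_subset_isPartitionList {s : Set (List ℕ)}
    (hs : s ⊆ {l | IsPartitionList l}) : FiniteFibers s List.sum :=
  finiteFibers_isPartitionList.mono hs

lemma countGF_union_of_isPartitionList {s t : Set (List ℕ)} (hst : Disjoint s t)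
    (h : s ∪ t ⊆ {l | IsPartitionList l}) :
    countGF (s ∪ t) List.sum = countGF s List.sum + countGF t List.sum :=
  countGF_union hst (.of_subset_isPartitionList (Set.subset_union_left.trans h))
    (.of_subset_isPartitionList (Set.subset_union_right.trans h))

lemma countGF_image_cons (c : ℕ) (s : Set (List ℕ)) :
    countGF (List.cons c '' s) List.sum = X ^ c * countGF s List.sum :=
  countGF_image c List.cons_injective.injOn fun t _ => by rw [List.sum_cons, add_comm]

lemma getD_antitone {l : List ℕ} (hl : l.Pairwise (· ≥ ·)) : Antitone (l.getD · 0) := by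
  intro i i' hii'
  dsimp only
  rcases lt_or_ge i' l.length with hi' | hi'
  · rw [List.getD_eq_getElem _ _ hi', List.getD_eq_getElem _ _ (hii'.trans_lt hi')]
    rcases hii'.eq_or_lt with rfl | hlt
    · exact le_rfl
    · exact hl.rel_get_of_lt (a := ⟨i, hii'.trans_lt hi'⟩) (b := ⟨i', hi'⟩) hlt
  · rw [List.getD_eq_default _ _ hi']
    exact Nat.zero_le _

lemma getD_le_headD {l : List ℕ} (hl : l.Pairwise (· ≥ ·)) (i : ℕ) :
    l.getD i 0 ≤ l.headD 0 := by
  cases l with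
  | nil => simp
  | cons a t => exact getD_antitone hl (Nat.zero_le i)

lemma lt_length_of_getD_pos {l : List ℕ} {i : ℕ} (h : 0 < l.getD i 0) : i < l.length := by
  by_contra hi
  rw [List.getD_eq_default _ _ (not_lt.mp hi)] at h
  exact h.false

lemma getD_drop (l : List ℕ) (k i : ℕ) : (l.drop k).getD i 0 = l.getD (k + i) 0 := by
  simp [List.getD_eq_getElem?_getD]

lemma getD_pred_le_of_mem_take {l : List ℕ} {k x : ℕ} (hl : l.Pairwise (· ≥ ·))
    (hx : x ∈ l.take k) : l.getD (k - 1) 0 ≤ x := by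
  obtain ⟨i, hi, rfl⟩ := List.mem_iff_getElem.mp hx
  rw [List.length_take] at hi
  rw [List.getElem_take, ← List.getD_eq_getElem _ 0]
  exact getD_antitone hl (by omega)

lemma le_getD_of_mem_drop {l : List ℕ} {k x : ℕ} (hl : l.Pairwise (· ≥ ·))
    (hx : x ∈ l.drop k) : x ≤ l.getD k 0 := by
  obtain ⟨i, hi, rfl⟩ := List.mem_iff_getElem.mp hx
  rw [← List.getD_eq_getElem _ 0, getD_drop]
  exact getD_antitone hl (Nat.le_add_right k i)

lemma constantCoeff_qpoch (n : ℕ) : constantCoeff (qpoch n) = 1 := by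
  simp [qpoch, map_prod]

lemma qpoch_succ (n : ℕ) : qpoch (n + 1) = qpoch n * (1 - X ^ (n + 1)) :=
  Finset.prod_range_succ _ n

lemma eq_qpoch_inv_of_mul_eq_one {φ : ℚ⟦X⟧} {n : ℕ} (h : φ * qpoch n = 1) : φ = (qpoch n)⁻¹ :=
  (PowerSeries.eq_inv_iff_mul_eq_one (by simp [constantCoeff_qpoch])).mpr h

namespace PartitionList

def addColumns (c k : ℕ) (l : List ℕ) : List ℕ :=
  l.map (· + c) ++ List.replicate (k - l.length) c

def removeColumns (c : ℕ) (l : List ℕ) : List ℕ :=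
  (l.map (· - c)).filter (0 < ·)

variable {c k : ℕ} {l : List ℕ}

lemma length_addColumns (hl : l.length ≤ k) : (addColumns c k l).length = k := by
  simp only [addColumns, List.length_append, List.length_map, List.length_replicate]
  omega

lemma sum_addColumns (hl : l.length ≤ k) : (addColumns c k l).sum = l.sum + c * k := by
  have hsum : ∀ t : List ℕ, (t.map (· + c)).sum = t.sum + c * t.length := by
    intro t
    induction t with
    | nil => simp
    | cons a t ih => simp only [List.map_cons, List.sum_cons, List.length_cons, ih]; ring
  rw [addColumns, List.sum_append, hsum l, List.sum_replicate, smul_eq_mul, add_assoc,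
    ← mul_comm c, ← mul_add, Nat.add_sub_cancel' hl]

lemma le_of_mem_addColumns {x : ℕ} (hx : x ∈ addColumns c k l) : c ≤ x := by
  simp only [addColumns, List.mem_append, List.mem_map, List.mem_replicate] at hx
  omega

lemma pairwise_addColumns (hl : l.Pairwise (· ≥ ·)) : (addColumns c k l).Pairwise (· ≥ ·) := by
  refine List.pairwise_append.mpr ⟨List.pairwise_map.mpr (hl.imp fun h => by omega),
    List.pairwise_replicate.mpr (Or.inr le_rfl), fun x hx y hy => ?_⟩
  obtain ⟨z, -, rfl⟩ := List.mem_map.mp hx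
  rw [List.eq_of_mem_replicate hy]
  omega

lemma forall_mem_addColumns_le_iff {b : ℕ} :
    (∀ x ∈ addColumns c k l, x ≤ b + c) ↔ ∀ x ∈ l, x ≤ b := by
  simp only [addColumns, List.mem_append, List.mem_map, List.mem_replicate]
  constructor
  · intro h x hx
    have := h (x + c) (Or.inl ⟨x, hx, rfl⟩)
    omega
  · rintro h x (⟨y, hy, rfl⟩ | ⟨-, rfl⟩)
    · have := h y hy
      omega
    · omega

lemma removeColumns_addColumns (hl : ∀ x ∈ l, 0 < x) :
    removeColumns c (addColumns c k l) = l := by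
  have hcancel : (fun x => x - c) ∘ (fun x => x + c) = id :=
    funext fun x => Nat.add_sub_cancel x c
  simp only [removeColumns, addColumns, List.map_append, List.map_map, List.filter_append,
    hcancel, List.map_id, List.map_replicate, Nat.sub_self]
  rw [List.filter_eq_self.mpr (by simpa using hl), List.filter_eq_nil_iff.mpr (by simp),
    List.append_nil]

lemma isPartitionList_removeColumns (hl : l.Pairwise (· ≥ ·)) :
    IsPartitionList (removeColumns c l) :=
  ⟨(List.pairwise_map.mpr (hl.imp fun h => Nat.sub_le_sub_right h c)).filter _,
    fun x hx => by simpa using (List.mem_filter.mp hx).2⟩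

lemma length_removeColumns_le : (removeColumns c l).length ≤ l.length :=
  (List.length_filter_le _ _).trans (List.length_map _).le

lemma addColumns_removeColumns (hl : l.Pairwise (· ≥ ·)) (hc : ∀ x ∈ l, c ≤ x) :
    addColumns c l.length (removeColumns c l) = l := by
  induction l with
  | nil => rfl
  | cons a t ih =>
    have hca : c ≤ a := hc a List.mem_cons_self
    have hct : ∀ x ∈ t, c ≤ x := fun x hx => hc x (List.mem_cons_of_mem a hx)
    rcases hca.eq_or_lt with rfl | hlt
    · have hall : ∀ x ∈ c :: t, x = c := by
        simp only [List.forall_mem_cons, true_and]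
        exact fun x hx => le_antisymm (List.rel_of_pairwise_cons hl hx) (hct x hx)
      have hnil : removeColumns c (c :: t) = [] := by
        simpa [removeColumns, List.filter_eq_nil_iff] using
          fun x hx => Nat.sub_eq_zero_of_le (hall x hx).le
      rw [hnil, addColumns, List.map_nil, List.nil_append, List.length_nil, Nat.sub_zero]
      exact (List.eq_replicate_iff.mpr ⟨rfl, hall⟩).symm
    · have hcons : removeColumns c (a :: t) = (a - c) :: removeColumns c t := by
        simp [removeColumns, Nat.sub_pos_of_lt hlt]
      have ht := ih hl.of_cons hct
      rw [hcons]
      simp only [addColumns, List.map_cons, List.length_cons, Nat.sub_add_cancel hlt.le,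
        List.cons_append, Nat.add_sub_add_right] at ht ⊢
      rw [ht]

def lengthLe (k : ℕ) : Set (List ℕ) := {l | IsPartitionList l ∧ l.length ≤ k}

def partsLe (b : ℕ) : Set (List ℕ) := {l | IsPartitionList l ∧ ∀ x ∈ l, x ≤ b}

def box (k b : ℕ) : Set (List ℕ) := {l | IsPartitionList l ∧ l.length ≤ k ∧ ∀ x ∈ l, x ≤ b}

lemma mem_image_addColumns_lengthLe_iff :
    l ∈ addColumns c k '' lengthLe k ↔
      l.Pairwise (· ≥ ·) ∧ l.length = k ∧ ∀ x ∈ l, c ≤ x := by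
  constructor
  · rintro ⟨t, ⟨ht, htk⟩, rfl⟩
    exact ⟨pairwise_addColumns ht.1, length_addColumns htk, fun _ => le_of_mem_addColumns⟩
  · rintro ⟨hl, rfl, hc⟩
    exact ⟨removeColumns c l, ⟨isPartitionList_removeColumns hl, length_removeColumns_le⟩,
      addColumns_removeColumns hl hc⟩

lemma mem_image_addColumns_box_iff {b : ℕ} :
    l ∈ addColumns c k '' box k b ↔
      l.Pairwise (· ≥ ·) ∧ l.length = k ∧ ∀ x ∈ l, c ≤ x ∧ x ≤ b + c := by
  constructor
  · rintro ⟨t, ⟨ht, htk, htb⟩, rfl⟩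
    exact ⟨pairwise_addColumns ht.1, length_addColumns htk, fun x hx =>
      ⟨le_of_mem_addColumns hx, forall_mem_addColumns_le_iff.mpr htb x hx⟩⟩
  · rintro ⟨hl, rfl, hcb⟩
    have hrestore := addColumns_removeColumns hl fun x hx => (hcb x hx).1
    refine ⟨removeColumns c l, ⟨isPartitionList_removeColumns hl, length_removeColumns_le,
      (forall_mem_addColumns_le_iff (c := c) (k := l.length)).mp ?_⟩, hrestore⟩
    rw [hrestore]
    exact fun x hx => (hcb x hx).2

lemma injOn_addColumns : Set.InjOn (addColumns c k) {t | ∀ x ∈ t, 0 < x} :=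
  fun t ht t' ht' h => by
    rw [← removeColumns_addColumns (c := c) (k := k) ht, h, removeColumns_addColumns ht']

lemma finiteFibers_image_addColumns {s : Set (List ℕ)} (hs : s ⊆ lengthLe k) :
    FiniteFibers (addColumns c k '' s) List.sum :=
  FiniteFibers.image (K := c * k) (fun _ ht => sum_addColumns (hs ht).2)
    (.of_subset_isPartitionList fun _ ht => (hs ht).1)

lemma countGF_image_addColumns {s : Set (List ℕ)} (hs : s ⊆ lengthLe k) :
    countGF (addColumns c k '' s) List.sum = X ^ (c * k) * countGF s List.sum :=
  countGF_image _ (injOn_addColumns.mono fun _ ht => (hs ht).1.2)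
    fun _ ht => sum_addColumns (hs ht).2

lemma partsLe_zero : partsLe 0 = {[]} := by
  ext l
  refine ⟨fun ⟨hl, hle⟩ => List.eq_nil_iff_forall_not_mem.mpr fun x hx =>
    (hl.2 x hx).ne' (Nat.le_zero.mp (hle x hx)), ?_⟩
  rintro rfl
  exact ⟨.nil, by simp⟩

lemma lengthLe_zero : lengthLe 0 = {[]} := by
  ext l
  cases l <;> simp [lengthLe, IsPartitionList.nil]

lemma box_zero_left (b : ℕ) : box 0 b = {[]} := by
  ext l
  cases l <;> simp [box, IsPartitionList.nil]

lemma box_zero_right (a : ℕ) : box a 0 = {[]} := by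
  ext l
  refine ⟨fun ⟨hl, _, hle⟩ => List.eq_nil_iff_forall_not_mem.mpr fun x hx =>
    (hl.2 x hx).ne' (Nat.le_zero.mp (hle x hx)), ?_⟩
  rintro rfl
  exact ⟨.nil, by simp, by simp⟩

lemma partsLe_succ (b : ℕ) :
    partsLe (b + 1) = partsLe b ∪ List.cons (b + 1) '' partsLe (b + 1) := by
  ext l
  cases l with
  | nil => simp [partsLe, IsPartitionList.nil]
  | cons a t =>
    simp only [partsLe, Set.mem_union, Set.mem_image, Set.mem_ofPred_eq, List.cons.injEq,
      IsPartitionList.cons_iff, List.forall_mem_cons]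
    grind

lemma box_succ_succ (a b : ℕ) :
    box (a + 1) (b + 1) = box (a + 1) b ∪ List.cons (b + 1) '' box a (b + 1) := by
  ext l
  cases l with
  | nil => simp [box, IsPartitionList.nil]
  | cons x t =>
    simp only [box, Set.mem_union, Set.mem_image, Set.mem_ofPred_eq, List.cons.injEq,
      IsPartitionList.cons_iff, List.forall_mem_cons, List.length_cons]
    grind

lemma lengthLe_succ (a : ℕ) :
    lengthLe (a + 1) = lengthLe a ∪ addColumns 1 (a + 1) '' lengthLe (a + 1) := by
  ext l
  rw [Set.mem_union, mem_image_addColumns_lengthLe_iff]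
  simp only [lengthLe, Set.mem_ofPred_eq, IsPartitionList]
  grind

lemma disjoint_cons_image {s t : Set (List ℕ)} {b : ℕ} (hs : ∀ l ∈ s, ∀ x ∈ l, x ≤ b) :
    Disjoint s (List.cons (b + 1) '' t) :=
  Set.disjoint_left.mpr fun _ hl ⟨_, _, hcons⟩ => by
    have := hs _ hl (b + 1) (hcons ▸ List.mem_cons_self)
    omega

lemma countGF_partsLe_mul_qpoch (b : ℕ) : countGF (partsLe b) List.sum * qpoch b = 1 := by
  induction b with
  | zero => simp [partsLe_zero, countGF_singleton, qpoch]
  | succ b ih =>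
    have hrec := partsLe_succ b
    have hsplit := countGF_union_of_isPartitionList
      (disjoint_cons_image (s := partsLe b) fun _ hl => hl.2)
      (by rw [← hrec]; exact fun _ hl => hl.1)
    rw [← hrec, countGF_image_cons] at hsplit
    rw [qpoch_succ]
    linear_combination qpoch b * hsplit + ih

lemma countGF_partsLe (b : ℕ) : countGF (partsLe b) List.sum = (qpoch b)⁻¹ :=
  eq_qpoch_inv_of_mul_eq_one (countGF_partsLe_mul_qpoch b)

lemma countGF_lengthLe_mul_qpoch (a : ℕ) : countGF (lengthLe a) List.sum * qpoch a = 1 := by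
  induction a with
  | zero => simp [lengthLe_zero, countGF_singleton, qpoch]
  | succ a ih =>
    have hrec := lengthLe_succ a
    have hdisj : Disjoint (lengthLe a) (addColumns 1 (a + 1) '' lengthLe (a + 1)) :=
      Set.disjoint_left.mpr fun l hl hl' => by
        have := (mem_image_addColumns_lengthLe_iff.mp hl').2.1
        have := hl.2
        omega
    have hsplit := countGF_union_of_isPartitionList hdisj
      (by rw [← hrec]; exact fun _ hl => hl.1)
    rw [← hrec, countGF_image_addColumns subset_rfl, one_mul] at hsplit
    rw [qpoch_succ]
    linear_combination qpoch a * hsplit + ih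

lemma countGF_lengthLe (a : ℕ) : countGF (lengthLe a) List.sum = (qpoch a)⁻¹ :=
  eq_qpoch_inv_of_mul_eq_one (countGF_lengthLe_mul_qpoch a)

lemma countGF_box_mul_qpoch (a b : ℕ) :
    countGF (box a b) List.sum * qpoch a * qpoch b = qpoch (a + b) := by
  induction a generalizing b with
  | zero => simp [box_zero_left, countGF_singleton, qpoch]
  | succ a iha =>
    induction b with
    | zero => simp [box_zero_right, countGF_singleton, qpoch]
    | succ b ihb =>
      have hrec := box_succ_succ a b
      have hsplit := countGF_union_of_isPartitionList
        (disjoint_cons_image (s := box (a + 1) b) fun _ hl => hl.2.2)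
        (by rw [← hrec]; exact fun _ hl => hl.1)
      rw [← hrec, countGF_image_cons] at hsplit
      have iha' := iha (b + 1)
      rw [qpoch_succ a, show a + 1 + b = a + b + 1 by ring] at ihb
      rw [qpoch_succ b, show a + (b + 1) = a + b + 1 by ring] at iha'
      rw [show a + 1 + (b + 1) = a + b + 1 + 1 by ring, qpoch_succ (a + b + 1), qpoch_succ a,
        qpoch_succ b]
      -- `(1 - q^(b+1)) + q^(b+1) (1 - q^(a+1)) = 1 - q^(a+b+2)`
      linear_combination qpoch a * (1 - X ^ (a + 1)) * qpoch b * (1 - X ^ (b + 1)) * hsplit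
        + (1 - X ^ (b + 1)) * ihb + X ^ (b + 1) * (1 - X ^ (a + 1)) * iha'

lemma countGF_box (a b : ℕ) : countGF (box a b) List.sum = gauss (a + b) a := by
  have hunit (n : ℕ) : qpoch n * (qpoch n)⁻¹ = 1 :=
    PowerSeries.mul_inv_cancel _ (by simp [constantCoeff_qpoch])
  rw [gauss, Nat.add_sub_cancel_left, ← countGF_box_mul_qpoch]
  calc countGF (box a b) List.sum
      = countGF (box a b) List.sum * (qpoch a * (qpoch a)⁻¹) * (qpoch b * (qpoch b)⁻¹) := by
        rw [hunit, hunit, mul_one, mul_one]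
    _ = _ := by ring

def constParts (c : ℕ) : Set (List ℕ) := {l | IsPartitionList l ∧ l ≠ [] ∧ ∀ x ∈ l, x = c}

lemma mem_constParts (hc : 0 < c) {l : List ℕ} :
    l ∈ constParts c ↔ l ≠ [] ∧ ∀ x ∈ l, x = c := by
  refine ⟨fun hl => hl.2, fun ⟨hne, hall⟩ => ⟨⟨?_, fun x hx => hall x hx ▸ hc⟩, hne, hall⟩⟩
  rw [List.eq_replicate_iff.mpr ⟨rfl, hall⟩]
  exact List.pairwise_replicate.mpr (Or.inr le_rfl)

lemma constParts_eq (hc : 0 < c) : constParts c = {[c]} ∪ List.cons c '' constParts c := by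
  ext l
  rcases l with _ | ⟨a, t⟩
  · simp [constParts]
  · simp only [Set.mem_union, Set.mem_singleton_iff, Set.mem_image, List.cons.injEq,
      mem_constParts hc, List.forall_mem_cons]
    by_cases ht : t = []
    · simp [ht, eq_comm]
    · simp only [ht, and_false, false_or]
      constructor
      · rintro ⟨-, rfl, hall⟩
        exact ⟨t, ⟨ht, hall⟩, rfl, rfl⟩
      · rintro ⟨t, ⟨-, hall⟩, rfl, rfl⟩
        exact ⟨List.cons_ne_nil _ _, rfl, hall⟩

lemma countGF_constParts (hc : 0 < c) :
    countGF (constParts c) List.sum = X ^ c * (1 - X ^ c)⁻¹ := by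
  have hdisj : Disjoint {[c]} (List.cons c '' constParts c) :=
    Set.disjoint_singleton_left.mpr fun ⟨t, ht, heq⟩ => ht.2.1 (List.cons.inj heq).2
  have hsplit := countGF_union_of_isPartitionList hdisj
    (by rw [← constParts_eq hc]; exact fun _ hl => hl.1)
  rw [← constParts_eq hc, countGF_singleton, countGF_image_cons, List.sum_singleton] at hsplit
  have hunit : (1 - X ^ c : ℚ⟦X⟧) * (1 - X ^ c)⁻¹ = 1 :=
    PowerSeries.mul_inv_cancel _ (by simp [hc.ne'])
  calc countGF (constParts c) List.sum
      = countGF (constParts c) List.sum * ((1 - X ^ c) * (1 - X ^ c)⁻¹) := by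
        rw [hunit, mul_one]
    _ = X ^ c * (1 - X ^ c)⁻¹ := by
        linear_combination (1 - X ^ c)⁻¹ * hsplit

end PartitionList

lemma findGreatest_eq_iff_of_downClosed {P : ℕ → Prop} [DecidablePred P] {N h : ℕ}
    (hdown : ∀ k k', 0 < k' → k' ≤ k → P k → P k') (hbound : ∀ k, P k → k ≤ N) :
    Nat.findGreatest P N = h ↔ (h ≠ 0 → P h) ∧ ¬P (h + 1) := by
  rw [Nat.findGreatest_eq_iff]
  constructor
  · rintro ⟨-, hh, hmax⟩
    exact ⟨hh, fun hP => hmax (Nat.lt_succ_self h) (hbound _ hP) hP⟩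
  · rintro ⟨hh, hnext⟩
    refine ⟨?_, hh, fun k hk _ hP => hnext (hdown k (h + 1) h.succ_pos hk hP)⟩
    rcases Nat.eq_zero_or_pos h with rfl | hpos
    · exact Nat.zero_le N
    · exact hbound h (hh hpos.ne')

lemma Antitone.exists_add_eq_and_iff {a : ℕ → ℕ} (ha : Antitone a) (m j : ℕ) :
    ((∃ i, a i + m = i) ∧ (j ≠ 0 → j ≤ a (m + j - 1)) ∧ a (m + j) ≤ j) ↔ a (m + j) = j := by
  constructor
  · rintro ⟨⟨i, hi⟩, hj, hle⟩
    by_contra hne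
    have hpos : j ≠ 0 := by omega
    rcases lt_or_ge i (m + j) with hlt | hge
    · have := ha (show i ≤ m + j - 1 by omega)
      have := hj hpos
      omega
    · have := ha hge
      omega
  · intro heq
    refine ⟨⟨m + j, by omega⟩, fun _ => ?_, heq.le⟩
    exact heq.ge.trans (ha (Nat.sub_le _ _))

namespace PartitionList

-- `l.getD i 0` is the part `α_{i+1}`.
def durfeeProfile (m j h : ℕ) : Set (List ℕ) :=
  {l | IsPartitionList l ∧ l.getD (m + j) 0 = j ∧ h ≤ l.getD (m + j + h) 0 ∧
    l.getD (m + j + h + 1) 0 ≤ h}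

variable {l : List ℕ} {m j h : ℕ}

lemma part_eq_getD (i : ℕ) : part l (i + 1) = l.getD i 0 := rfl

lemma mem_rankSet_iff : (m : ℤ) ∈ rankSet l ↔ ∃ i, l.getD i 0 + m = i := by
  simp only [rankSet, Set.mem_ofPred_eq, part_eq_getD]
  exact exists_congr fun i => by omega

lemma getD_le_headD_add_length (hl : IsPartitionList l) (i : ℕ) :
    l.getD i 0 ≤ l.headD 0 + l.length :=
  (getD_le_headD hl.1 i).trans (Nat.le_add_right _ _)

lemma mDurfeeWidth_eq_iff (hl : IsPartitionList l) :
    mDurfeeWidth m l = j ↔ (j ≠ 0 → j ≤ l.getD (m + j - 1) 0) ∧ l.getD (m + j) 0 ≤ j := by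
  have hP (k : ℕ) : (0 < (m : ℤ) + k ∧ (k : ℤ) ≤ part l ((m : ℤ) + k).toNat) ↔
      0 < m + k ∧ k ≤ l.getD (m + k - 1) 0 := by
    rw [show ((m : ℤ) + k).toNat = m + k by omega]
    simp only [part]
    omega
  rw [mDurfeeWidth, findGreatest_eq_iff_of_downClosed]
  · simp only [hP, show m + (j + 1) - 1 = m + j by omega]
    omega
  · intro k k' hk' hkk' hk
    rw [hP] at hk ⊢
    exact ⟨by omega, hkk'.trans (hk.2.trans (getD_antitone hl.1 (by omega)))⟩
  · intro k hk
    exact ((hP k).mp hk).2.trans (getD_le_headD_add_length hl _)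

lemma hMax_eq_iff (hl : IsPartitionList l) :
    hMax m l j = h ↔ h ≤ l.getD (m + j + h) 0 ∧ l.getD (m + j + h + 1) 0 ≤ h := by
  have hP (k : ℕ) : (0 < (m : ℤ) + j + 1 + k ∧ (k : ℤ) ≤ part l ((m : ℤ) + j + 1 + k).toNat) ↔
      k ≤ l.getD (m + j + k) 0 := by
    rw [show ((m : ℤ) + j + 1 + k).toNat = m + j + k + 1 by omega, part_eq_getD]
    omega
  rw [hMax, findGreatest_eq_iff_of_downClosed]
  · simp only [hP, show m + j + (h + 1) = m + j + h + 1 by omega]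
    constructor
    · rintro ⟨hh, hnext⟩
      refine ⟨?_, by omega⟩
      rcases Nat.eq_zero_or_pos h with rfl | hpos
      · exact Nat.zero_le _
      · exact hh hpos.ne'
    · rintro ⟨hh, hnext⟩
      exact ⟨fun _ => hh, by omega⟩
  · intro k k' _ hkk' hk
    rw [hP] at hk ⊢
    exact hkk'.trans (hk.trans (getD_antitone hl.1 (by omega)))
  · intro k hk
    exact ((hP k).mp hk).trans (getD_le_headD_add_length hl _)

lemma setOf_rankSet_mDurfeeWidth_hMax (m j h : ℕ) :
    {l | IsPartitionList l ∧ (m : ℤ) ∈ rankSet l ∧ mDurfeeWidth m l = j ∧ hMax m l j = h} =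
      durfeeProfile m j h := by
  ext l
  simp only [durfeeProfile, Set.mem_ofPred_eq]
  refine and_congr_right fun hl => ?_
  rw [mem_rankSet_iff, mDurfeeWidth_eq_iff hl, hMax_eq_iff hl, ← and_assoc, ← and_assoc,
    (getD_antitone hl.1).exists_add_eq_and_iff m j, and_assoc]

def glue (j : ℕ) : List ℕ × List ℕ × List ℕ → List ℕ
  | (A, B, C) => A ++ j :: (B ++ C)

lemma sum_glue (z : List ℕ × List ℕ × List ℕ) :
    (glue j z).sum = z.1.sum + (z.2.1.sum + z.2.2.sum) + j := by
  obtain ⟨A, B, C⟩ := z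
  simp only [glue, List.sum_append, List.sum_cons]
  ring

lemma glue_mem_durfeeProfile (hj : 0 < j) (hhj : h ≤ j) {A B C : List ℕ}
    (hA : A.Pairwise (· ≥ ·) ∧ A.length = m + j ∧ ∀ x ∈ A, j ≤ x)
    (hB : B.Pairwise (· ≥ ·) ∧ B.length = h ∧ ∀ x ∈ B, h ≤ x ∧ x ≤ j - h + h)
    (hC : C ∈ partsLe h) : glue j (A, B, C) ∈ durfeeProfile m j h := by
  obtain ⟨hAs, hAl, hAj⟩ := hA
  obtain ⟨hBs, hBl, hBh⟩ := hB
  obtain ⟨⟨hCs, hCp⟩, hCh⟩ := hC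
  have hBj : ∀ x ∈ B, x ≤ j := fun x hx => (hBh x hx).2.trans (by omega)
  have hBC : (B ++ C).Pairwise (· ≥ ·) := List.pairwise_append.mpr
    ⟨hBs, hCs, fun x hx y hy => (hCh y hy).trans (hBh x hx).1⟩
  have hBCj : ∀ x ∈ B ++ C, x ≤ j := by
    simp only [List.mem_append]
    rintro x (hx | hx)
    · exact hBj x hx
    · exact (hCh x hx).trans (by omega)
  have hsorted : (glue j (A, B, C)).Pairwise (· ≥ ·) := by
    refine List.pairwise_append.mpr ⟨hAs, List.pairwise_cons.mpr ⟨hBCj, hBC⟩, ?_⟩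
    simp only [List.mem_cons]
    rintro x hx y (rfl | hy)
    · exact hAj x hx
    · exact (hBCj y hy).trans (hAj x hx)
  have hpos : ∀ x ∈ glue j (A, B, C), 0 < x := by
    simp only [glue, List.mem_append, List.mem_cons]
    rintro x (hx | rfl | hx | hx)
    · exact hj.trans_le (hAj x hx)
    · exact hj
    · have := List.length_pos_of_mem hx
      have := (hBh x hx).1
      omega
    · exact hCp x hx
  have hget (i : ℕ) : (glue j (A, B, C)).getD (m + j + 1 + i) 0 = (B ++ C).getD i 0 := by
    rw [glue, List.getD_append_right _ _ _ _ (by omega), hAl,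
      show m + j + 1 + i - (m + j) = i + 1 by omega]
    rfl
  refine ⟨⟨hsorted, hpos⟩, ?_, ?_, ?_⟩
  · rw [glue, List.getD_append_right _ _ _ _ hAl.le, hAl, Nat.sub_self, List.getD_cons_zero]
  · rcases Nat.eq_zero_or_pos h with rfl | hpos
    · exact Nat.zero_le _
    · rw [show m + j + h = m + j + 1 + (h - 1) by omega, hget,
        List.getD_append _ _ _ _ (by omega), List.getD_eq_getElem _ _ (by omega)]
      exact (hBh _ (List.getElem_mem _)).1
  · rw [show m + j + h + 1 = m + j + 1 + h by omega, hget,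
      List.getD_append_right _ _ _ _ hBl.le, hBl, Nat.sub_self]
    rcases C with _ | ⟨c, C⟩
    · exact Nat.zero_le _
    · exact hCh c List.mem_cons_self

lemma exists_glue_of_mem_durfeeProfile (hj : 0 < j) (hl : l ∈ durfeeProfile m j h) :
    ∃ A B C, (A.Pairwise (· ≥ ·) ∧ A.length = m + j ∧ ∀ x ∈ A, j ≤ x) ∧
      (B.Pairwise (· ≥ ·) ∧ B.length = h ∧ ∀ x ∈ B, h ≤ x ∧ x ≤ j - h + h) ∧
      C ∈ partsLe h ∧ glue j (A, B, C) = l := by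
  obtain ⟨⟨hs, hp⟩, hrow, hlow, hhigh⟩ := hl
  have hlen : m + j < l.length := lt_length_of_getD_pos (by rw [hrow]; exact hj)
  have hlenB : m + j + h < l.length := by
    rcases Nat.eq_zero_or_pos h with rfl | hpos
    · simpa using hlen
    · exact lt_length_of_getD_pos (hpos.trans_le hlow)
  have hrest : l.drop (m + j) = j :: ((l.drop (m + j + 1)).take h ++ l.drop (m + j + h + 1)) := by
    rw [List.drop_eq_getElem_cons hlen, ← List.getD_eq_getElem _ 0, hrow,
      show m + j + h + 1 = m + j + 1 + h by omega, ← List.drop_drop (i := h),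
      List.take_append_drop]
  refine ⟨l.take (m + j), (l.drop (m + j + 1)).take h, l.drop (m + j + h + 1),
    ⟨hs.sublist (List.take_sublist _ _), by simp; omega, fun x hx => ?_⟩,
    ⟨(hs.sublist (List.drop_sublist _ _)).sublist (List.take_sublist _ _), by simp; omega,
      fun x hx => ⟨?_, ?_⟩⟩,
    ⟨⟨hs.sublist (List.drop_sublist _ _), fun x hx => hp x (List.mem_of_mem_drop hx)⟩,
      fun x hx => (le_getD_of_mem_drop hs hx).trans hhigh⟩, ?_⟩
  · exact hrow.ge.trans ((getD_antitone hs (Nat.sub_le _ _)).trans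
      (getD_pred_le_of_mem_take hs hx))
  · have := getD_pred_le_of_mem_take (hs.sublist (List.drop_sublist _ _)) hx
    rw [getD_drop] at this
    rcases Nat.eq_zero_or_pos h with rfl | hpos
    · exact Nat.zero_le _
    · exact hlow.trans ((show m + j + 1 + (h - 1) = m + j + h by omega) ▸ this)
  · have := le_getD_of_mem_drop hs (List.mem_of_mem_take hx)
    exact this.trans ((getD_antitone hs (Nat.le_succ _)).trans (hrow.le.trans (by omega)))
  · rw [glue, ← hrest, List.take_append_drop]

lemma durfeeProfile_eq_image_glue (hj : 0 < j) (hhj : h ≤ j) :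
    durfeeProfile m j h = glue j '' ((addColumns j (m + j) '' lengthLe (m + j)) ×ˢ
      ((addColumns h h '' box h (j - h)) ×ˢ partsLe h)) := by
  ext l
  constructor
  · intro hl
    obtain ⟨A, B, C, hA, hB, hC, rfl⟩ := exists_glue_of_mem_durfeeProfile hj hl
    exact ⟨(A, B, C), ⟨mem_image_addColumns_lengthLe_iff.mpr hA,
      mem_image_addColumns_box_iff.mpr hB, hC⟩, rfl⟩
  · rintro ⟨⟨A, B, C⟩, ⟨hA, hB, hC⟩, rfl⟩
    exact glue_mem_durfeeProfile hj hhj (mem_image_addColumns_lengthLe_iff.mp hA)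
      (mem_image_addColumns_box_iff.mp hB) hC

lemma injOn_glue {s t u : Set (List ℕ)} {a b : ℕ} (hs : ∀ A ∈ s, A.length = a)
    (ht : ∀ B ∈ t, B.length = b) : Set.InjOn (glue j) (s ×ˢ (t ×ˢ u)) := by
  rintro ⟨A, B, C⟩ ⟨hA, hB, -⟩ ⟨A', B', C'⟩ ⟨hA', hB', -⟩ heq
  obtain ⟨rfl, hrest⟩ := List.append_inj heq ((hs A hA).trans (hs A' hA').symm)
  obtain ⟨rfl, rfl⟩ := List.append_inj (List.cons.inj hrest).2 ((ht B hB).trans (ht B' hB').symm)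
  rfl

lemma durfeeProfile_zero (m : ℕ) : durfeeProfile m 0 0 = lengthLe m := by
  ext l
  simp only [durfeeProfile, lengthLe, Set.mem_ofPred_eq, Nat.add_zero, Nat.zero_le, true_and,
    Nat.le_zero]
  refine and_congr_right fun hl => ⟨fun hzero => ?_, fun hlen => ?_⟩
  · by_contra! hlen
    rw [List.getD_eq_getElem _ _ hlen] at hzero
    exact (hl.2 _ (List.getElem_mem hlen)).ne' hzero.1
  · exact ⟨List.getD_eq_default _ _ hlen, List.getD_eq_default _ _ (by omega)⟩

lemma countGF_durfeeProfile (hhj : h ≤ j) :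
    countGF (durfeeProfile m j h) List.sum =
      X ^ ((m + j) * j) * X ^ j * X ^ (h ^ 2) * gauss j h * (qpoch h)⁻¹ * (qpoch (m + j))⁻¹ := by
  rcases Nat.eq_zero_or_pos j with rfl | hj
  · obtain rfl : h = 0 := Nat.le_zero.mp hhj
    simp [durfeeProfile_zero, countGF_lengthLe, gauss, qpoch]
  have hA : ∀ A ∈ addColumns j (m + j) '' lengthLe (m + j), A.length = m + j := by
    rintro _ ⟨t, ht, rfl⟩
    exact length_addColumns ht.2
  have hB : ∀ B ∈ addColumns h h '' box h (j - h), B.length = h := by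
    rintro _ ⟨t, ht, rfl⟩
    exact length_addColumns ht.2.1
  have hfinA := finiteFibers_image_addColumns (c := j) (subset_rfl : lengthLe (m + j) ⊆ _)
  have hfinB := finiteFibers_image_addColumns (c := h) (fun _ ht => ⟨ht.1, ht.2.1⟩ :
    box h (j - h) ⊆ lengthLe h)
  have hfinC : FiniteFibers (partsLe h) List.sum := .of_subset_isPartitionList fun _ ht => ht.1
  rw [durfeeProfile_eq_image_glue hj hhj,
    countGF_image (f := fun z => z.1.sum + (z.2.1.sum + z.2.2.sum)) j (injOn_glue hA hB)
      fun z _ => sum_glue z,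
    countGF_prod hfinA (hfinB.prod hfinC), countGF_prod hfinB hfinC,
    countGF_image_addColumns subset_rfl,
    countGF_image_addColumns (fun _ ht => ⟨ht.1, ht.2.1⟩ : box h (j - h) ⊆ lengthLe h),
    countGF_lengthLe, countGF_box, countGF_partsLe, Nat.add_sub_cancel' hhj]
  ring

end PartitionList

/-- Equation (2.28): for fixed `m ≥ 0` and `0 ≤ h ≤ j`, the generating function for pairs
of partitions `(α, β)` with `β` nonempty with all parts equal to `j+m+1+h`, `m` in the
rank-set of `α`, `j` the width of the `m`-Durfee rectangle of `α`, and `h` the maximum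
integer with `α_{j+m+1+h} ≥ h`, is
`q^{(m+j)j} q^j q^{h²} [j choose h]_q / ((q;q)_h (q;q)_{m+j}) · q^{h+j+m+1}/(1-q^{m+1+j+h})`. -/
theorem genfun_V_jh (m j h : ℕ) (hhj : h ≤ j) :
    (PowerSeries.mk (fun n =>
      (Nat.card {ab : List ℕ × List ℕ //
        IsPartitionList ab.1 ∧ IsPartitionList ab.2 ∧ ab.2 ≠ [] ∧
        (∀ x ∈ ab.2, x = j + m + 1 + h) ∧
        (m : ℤ) ∈ rankSet ab.1 ∧
        mDurfeeWidth m ab.1 = j ∧ hMax m ab.1 j = h ∧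
        ab.1.sum + ab.2.sum = n} : ℚ)) : PowerSeries ℚ)
    = X ^ ((m + j) * j) * X ^ j * X ^ (h ^ 2) * gauss j h *
        (qpoch h)⁻¹ * (qpoch (m + j))⁻¹ *
        X ^ (h + j + m + 1) * (1 - (X : PowerSeries ℚ) ^ (m + 1 + j + h))⁻¹ := by
  open PartitionList in
  calc _ = countGF (durfeeProfile m j h ×ˢ constParts (j + m + 1 + h))
        fun ab => ab.1.sum + ab.2.sum := by
        rw [← setOf_rankSet_mDurfeeWidth_hMax]
        ext n
        rw [coeff_mk, coeff_countGF, ← Nat.card_coe_set_eq]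
        refine congrArg _ (Nat.card_congr (Equiv.subtypeEquivRight fun ab => ?_))
        simp only [constParts, Set.mem_inter_iff, Set.mem_prod, Set.mem_ofPred_eq,
          Set.mem_preimage, Set.mem_singleton_iff]
        tauto
    _ = countGF (durfeeProfile m j h) List.sum *
          countGF (constParts (j + m + 1 + h)) List.sum :=
        countGF_prod (.of_subset_isPartitionList fun _ hl => hl.1)
          (.of_subset_isPartitionList fun _ hl => hl.1)
    _ = _ := by
        rw [countGF_durfeeProfile hhj, countGF_constParts (by omega),
          show h + j + m + 1 = j + m + 1 + h by ring, show m + 1 + j + h = j + m + 1 + h by ring]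
        ring
end
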